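/- Let 1 ≤ q ≤ p < ∞, let ε ∈ E, and let f ∈ M^p_1. Then for every dyadic cube R, |R|^{1/p−1/q} ( ∫_R ( Σ_{j=−∞}^{∞} | Σ_{Q∈𝒟_j, Q⊇R} ⟨f,h^ε_Q⟩ h^ε_Q(x) |² )^{q/2} dx )^{1/q} ≤ C ‖f‖_{M^p_1}, where the inner sum runs over dyadic cubes Q of generation j that contain R, and C depends only on n, p, q. -/

import Mathlib

open MeasureTheory Filter Topology ENNReal NNReal

noncomputable section

/-- The dyadic cube `Q_{j,m} = ∏_{i} [mᵢ/2ʲ, (mᵢ+1)/2ʲ)` in `ℝⁿ`. -/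
def dyadicCube (n : ℕ) (j : ℤ) (m : Fin n → ℤ) : Set (Fin n → ℝ) :=
  {x | ∀ i, (m i : ℝ) / 2 ^ j ≤ x i ∧ x i < ((m i : ℝ) + 1) / 2 ^ j}

/-- The one-dimensional generating Haar pattern
`h^{εᵢ}(t) = χ_{[0,1)}(2t) + (−1)^{εᵢ} χ_{[1,2)}(2t)`. -/
def haarBase1 (e : ZMod 2) (t : ℝ) : ℝ :=
  Set.indicator (Set.Ico (0 : ℝ) 1) (fun _ => (1 : ℝ)) (2 * t)
    + (-1 : ℝ) ^ e.val * Set.indicator (Set.Ico (1 : ℝ) 2) (fun _ => (1 : ℝ)) (2 * t)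

/-- `h^ε = h^{ε₁} ⊗ ⋯ ⊗ h^{εₙ}`. -/
def haarBase {n : ℕ} (ε : Fin n → ZMod 2) (x : Fin n → ℝ) : ℝ :=
  ∏ i, haarBase1 (ε i) (x i)

/-- The Haar function `h^ε_Q(x) = 2^{jn/2} h^ε(2ʲx − m)` adapted to `Q_{j,m}`. -/
def haarFn {n : ℕ} (ε : Fin n → ZMod 2) (j : ℤ) (m : Fin n → ℤ) (x : Fin n → ℝ) : ℝ :=
  (2 : ℝ) ^ (((j : ℝ) * (n : ℝ)) / 2) * haarBase ε (fun i => (2 : ℝ) ^ j * x i - (m i : ℝ))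

/-- The set `E = (ℤ/2ℤ)ⁿ \ {0}` of nontrivial sign patterns. -/
def haarSigns (n : ℕ) : Finset (Fin n → ZMod 2) :=
  Finset.univ.erase 0

/-- The Haar coefficient `⟨f, h^ε_Q⟩ = ∫ f h^ε_Q`. -/
def haarCoeff {n : ℕ} (f : (Fin n → ℝ) → ℝ) (ε : Fin n → ZMod 2) (j : ℤ) (m : Fin n → ℤ) : ℝ :=
  ∫ x, f x * haarFn ε j m x

/-- `Σ_{Q ∈ 𝒟_j} ⟨f,h^ε_Q⟩ h^ε_Q(x)`. -/
def haarLayer {n : ℕ} (f : (Fin n → ℝ) → ℝ) (ε : Fin n → ZMod 2) (j : ℤ) (x : Fin n → ℝ) : ℝ :=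
  ∑' m : Fin n → ℤ, haarCoeff f ε j m * haarFn ε j m x

/-- The Haar square function `( Σ_j | Σ_{Q ∈ 𝒟_j} ⟨f,h^ε_Q⟩ h^ε_Q |² )^{1/2}`. -/
def haarSquareFn {n : ℕ} (f : (Fin n → ℝ) → ℝ) (ε : Fin n → ZMod 2) (x : Fin n → ℝ) : ℝ :=
  Real.sqrt (∑' j : ℤ, (haarLayer f ε j x) ^ 2)

/-- The (dyadic) Morrey norm `‖f‖_{M^p_q} = sup_{Q ∈ 𝒟} |Q|^{1/p−1/q} (∫_Q |f|^q)^{1/q}`. -/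
def morreyNorm {n : ℕ} (p q : ℝ) (f : (Fin n → ℝ) → ℝ) : ℝ≥0∞ :=
  ⨆ (j : ℤ) (m : Fin n → ℤ),
    volume (dyadicCube n j m) ^ (1 / p - 1 / q) *
      (∫⁻ x in dyadicCube n j m, ((‖f x‖₊ : ℝ≥0∞)) ^ q) ^ (1 / q)

/-- Membership in the Morrey space `M^p_q`. -/
def MemMorrey {n : ℕ} (p q : ℝ) (f : (Fin n → ℝ) → ℝ) : Prop :=
  AEStronglyMeasurable f volume ∧ morreyNorm p q f ≠ ⊤

/-- The average `m_Q(f) = |Q|⁻¹ ∫_Q f` over the dyadic cube `Q_{j,m}`. -/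
def cubeAvg {n : ℕ} (j : ℤ) (m : Fin n → ℤ) (f : (Fin n → ℝ) → ℝ) : ℝ :=
  (volume (dyadicCube n j m)).toReal⁻¹ * ∫ x in dyadicCube n j m, f x

/-- The dyadic BMO norm `sup_{Q ∈ 𝒟} m_Q(|a − m_Q(a)|)`. -/
def bmoNormD {n : ℕ} (a : (Fin n → ℝ) → ℝ) : ℝ≥0∞ :=
  ⨆ (j : ℤ) (m : Fin n → ℤ),
    ENNReal.ofReal (cubeAvg j m (fun x => |a x - cubeAvg j m a|))

/-- `Σ_{Q ∈ 𝒟_j} |Q|^{α/n} ⟨f,h^ε_Q⟩ h^ε_Q(x)`. -/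
def weightedLayer {n : ℕ} (α : ℝ) (f : (Fin n → ℝ) → ℝ) (ε : Fin n → ZMod 2) (j : ℤ)
    (x : Fin n → ℝ) : ℝ :=
  ∑' m : Fin n → ℤ,
    (volume (dyadicCube n j m)).toReal ^ (α / (n : ℝ)) * (haarCoeff f ε j m * haarFn ε j m x)

/-- The symmetric partial sum `Σ_{ε∈E} Σ_{j=−M}^{M} Σ_{Q∈𝒟_j} |Q|^{α/n} ⟨f,h^ε_Q⟩ h^ε_Q(x)`. -/
def dyadicIalphaPartial {n : ℕ} (α : ℝ) (f : (Fin n → ℝ) → ℝ) (M : ℕ) (x : Fin n → ℝ) : ℝ :=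
  ∑ ε ∈ haarSigns n, ∑ j ∈ Finset.Icc (-(M : ℤ)) (M : ℤ), weightedLayer α f ε j x

/-- The dyadic fractional integral operator `I_{α,dyadic}`, as the limit of `dyadicIalphaPartial`. -/
def dyadicIalpha {n : ℕ} (α : ℝ) (f : (Fin n → ℝ) → ℝ) (x : Fin n → ℝ) : ℝ :=
  limUnder atTop (fun M : ℕ => dyadicIalphaPartial α f M x)

/-- The commutator `[a, I_{α,dyadic}]f = a · I_{α,dyadic}f − I_{α,dyadic}(a f)`. -/
def dyadicComm {n : ℕ} (α : ℝ) (a f : (Fin n → ℝ) → ℝ) (x : Fin n → ℝ) : ℝ :=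
  a x * dyadicIalpha α f x - dyadicIalpha α (fun y => a y * f y) x

/-- Symmetric partial sums of the Haar expansion of `f`. -/
def haarPartial {n : ℕ} (f : (Fin n → ℝ) → ℝ) (M : ℕ) (x : Fin n → ℝ) : ℝ :=
  ∑ ε ∈ haarSigns n, ∑ j ∈ Finset.Icc (-(M : ℤ)) (M : ℤ), haarLayer f ε j x

/-- Convergence in `L^q` on every compact subset of `ℝⁿ`. -/
def TendstoLqLoc {n : ℕ} (q : ℝ) (F : ℕ → (Fin n → ℝ) → ℝ) (g : (Fin n → ℝ) → ℝ) : Prop :=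
  ∀ K : Set (Fin n → ℝ), IsCompact K →
    Tendsto (fun M => eLpNorm (fun x => F M x - g x) (ENNReal.ofReal q) (volume.restrict K))
      atTop (𝓝 0)

/-- The dyadic paraproduct `Σ_j Σ_{Q∈𝒟_j} ⟨f,χ_Q⟩ ⟨a,h^ε_Q⟩ h^ε_Q(x)/|Q|`. -/
def paraproduct {n : ℕ} (a f : (Fin n → ℝ) → ℝ) (ε : Fin n → ZMod 2) (x : Fin n → ℝ) : ℝ :=
  ∑' (j : ℤ) (m : Fin n → ℤ),
    (∫ y in dyadicCube n j m, f y) * haarCoeff a ε j m * haarFn ε j m x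
      / (volume (dyadicCube n j m)).toReal

/-- A `(p,q)`-block: an `L^q` function supported on a dyadic cube `Q` with
`‖A‖_{L^q} ≤ |Q|^{1/q−1/p}`. -/
def IsBlock {n : ℕ} (p q : ℝ) (A : (Fin n → ℝ) → ℝ) : Prop :=
  MemLp A (ENNReal.ofReal q) volume ∧
    ∃ (j : ℤ) (m : Fin n → ℤ), (∀ x ∉ dyadicCube n j m, A x = 0) ∧
      eLpNorm A (ENNReal.ofReal q) volume ≤ volume (dyadicCube n j m) ^ (1 / q - 1 / p)

/-- The block space (predual Morrey) norm `‖f‖_{H^p_q}`: infimum of `Σ|λⱼ|` over decompositions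
`f = Σ λⱼ aⱼ` into `(p,q)`-blocks. It equals `⊤` iff no decomposition exists. -/
def blockNorm {n : ℕ} (p q : ℝ) (f : (Fin n → ℝ) → ℝ) : ℝ≥0∞ :=
  ⨅ d : {d : (ℕ → ℝ) × (ℕ → (Fin n → ℝ) → ℝ) //
      (∀ i, IsBlock p q (d.2 i)) ∧ Summable (fun i => |d.1 i|) ∧
        ∀ᵐ x ∂volume, f x = ∑' i, d.1 i * d.2 i x},
    ENNReal.ofReal (∑' i, |(d : (ℕ → ℝ) × (ℕ → (Fin n → ℝ) → ℝ)).1 i|)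

/-- Membership in the span of Haar functions. -/
def InHaarSpan {n : ℕ} (b : (Fin n → ℝ) → ℝ) : Prop :=
  ∃ (s : Finset ((Fin n → ZMod 2) × ℤ × (Fin n → ℤ)))
    (c : (Fin n → ZMod 2) × ℤ × (Fin n → ℤ) → ℝ),
      (∀ u ∈ s, u.1 ≠ 0) ∧ ∀ x, b x = ∑ u ∈ s, c u * haarFn u.1 u.2.1 u.2.2 x

/-- `VMO_dyadic`: the closure in the dyadic BMO norm of the span of Haar functions. -/
def InVMOD {n : ℕ} (a : (Fin n → ℝ) → ℝ) : Prop :=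
  ∀ δ : ℝ, 0 < δ → ∃ b : (Fin n → ℝ) → ℝ, InHaarSpan b ∧
    bmoNormD (fun x => a x - b x) ≤ ENNReal.ofReal δ

/-- Euclidean distance on `Fin n → ℝ`. -/
def eucDist {n : ℕ} (x y : Fin n → ℝ) : ℝ :=
  Real.sqrt (∑ i, (x i - y i) ^ 2)

/-- The Riesz fractional integral `I_α f(x) = ∫ f(y)/|x−y|^{n−α} dy`. -/
def rieszPotential {n : ℕ} (α : ℝ) (f : (Fin n → ℝ) → ℝ) (x : Fin n → ℝ) : ℝ :=
  ∫ y, f y / eucDist x y ^ ((n : ℝ) - α)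

/-- A (half-open) cube in `ℝⁿ` with corner `c` and side length `l`. -/
def genCube {n : ℕ} (c : Fin n → ℝ) (l : ℝ) : Set (Fin n → ℝ) :=
  {x | ∀ i, c i ≤ x i ∧ x i < c i + l}

/-- Average over a general cube. -/
def genAvg {n : ℕ} (c : Fin n → ℝ) (l : ℝ) (f : (Fin n → ℝ) → ℝ) : ℝ :=
  (volume (genCube c l)).toReal⁻¹ * ∫ x in genCube c l, f x

/-- The (non-dyadic) BMO norm: supremum over all cubes of `m_Q(|a − m_Q(a)|)`. -/
def bmoNormFull {n : ℕ} (a : (Fin n → ℝ) → ℝ) : ℝ≥0∞ :=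
  ⨆ (c : Fin n → ℝ) (l : ℝ) (_ : 0 < l),
    ENNReal.ofReal (genAvg c l (fun x => |a x - genAvg c l a|))


/-- The truncated Haar square function `( Σ_{j≥k} | Σ_{Q∈𝒟_j} ⟨f,h^ε_Q⟩ h^ε_Q |² )^{1/2}`. -/
def haarSquareFnFrom {n : ℕ} (k : ℤ) (f : (Fin n → ℝ) → ℝ) (ε : Fin n → ZMod 2)
    (x : Fin n → ℝ) : ℝ :=
  Real.sqrt (∑' j : {j : ℤ // k ≤ j}, (haarLayer f ε j.1 x) ^ 2)

/-- `Σ_{Q ∈ 𝒟_k} ⟨f,χ_Q⟩ χ_Q(x)/|Q|`. -/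
def avgLayer {n : ℕ} (k : ℤ) (f : (Fin n → ℝ) → ℝ) (x : Fin n → ℝ) : ℝ :=
  ∑' m : Fin n → ℤ,
    (∫ y in dyadicCube n k m, f y) * Set.indicator (dyadicCube n k m) (fun _ => (1 : ℝ)) x
      / (volume (dyadicCube n k m)).toReal

/-- `Σ_{Q ∈ 𝒟_j, Q ⊆ R} ⟨f,h^ε_Q⟩ h^ε_Q(x)` where `R = Q_{k,m₀}`. -/
def haarLayerIn {n : ℕ} (f : (Fin n → ℝ) → ℝ) (ε : Fin n → ZMod 2) (k : ℤ) (m₀ : Fin n → ℤ)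
    (j : ℤ) (x : Fin n → ℝ) : ℝ :=
  ∑' m : {m : Fin n → ℤ // dyadicCube n j m ⊆ dyadicCube n k m₀},
    haarCoeff f ε j m.1 * haarFn ε j m.1 x

/-- The localized square function
`( Σ_{j ≥ −log₂ℓ(R)} | Σ_{Q∈𝒟_j, Q⊆R} ⟨f,h^ε_Q⟩ h^ε_Q |² )^{1/2}` for `R = Q_{k,m₀}`. -/
def haarSquareFnIn {n : ℕ} (f : (Fin n → ℝ) → ℝ) (ε : Fin n → ZMod 2) (k : ℤ) (m₀ : Fin n → ℤ)
    (x : Fin n → ℝ) : ℝ :=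
  Real.sqrt (∑' j : {j : ℤ // k ≤ j}, (haarLayerIn f ε k m₀ j.1 x) ^ 2)

/-- The square function `( Σ_j | Σ_{Q∈𝒟_j, Q ⊇ R} ⟨f,h^ε_Q⟩ h^ε_Q |² )^{1/2}` over cubes
containing `R = Q_{k,m₀}`. -/
def haarSquareFnUp {n : ℕ} (f : (Fin n → ℝ) → ℝ) (ε : Fin n → ZMod 2) (k : ℤ) (m₀ : Fin n → ℤ)
    (x : Fin n → ℝ) : ℝ :=
  Real.sqrt (∑' j : ℤ,
    (∑' m : {m : Fin n → ℤ // dyadicCube n k m₀ ⊆ dyadicCube n j m},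
      haarCoeff f ε j m.1 * haarFn ε j m.1 x) ^ 2)

/-! For each generation `j` at most one dyadic cube `Q` contains `R = Q_{k,m₀}`, and none does
when `j > k`. Since `h_Q` lives on `Q` with `|h_Q| ≤ |Q|^{-1/2}`, the Morrey condition gives
`|⟨f,h_Q⟩ h_Q(x)| ≤ |Q|⁻¹ ∫_Q |f| ≤ |Q|^{-1/p} ‖f‖_{M^p_1} = 2^{jn/p} ‖f‖_{M^p_1}`.
So the square function is dominated on `R` by a geometric series over `j ≤ k`, that is by
`C |R|^{-1/p} ‖f‖_{M^p_1}` pointwise, and integrating this constant over `R` gives the estimate. -/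

lemma abs_tsum_le_of_subsingleton {ι : Type*} [Subsingleton ι] {g : ι → ℝ} {B : ℝ} (hB : 0 ≤ B)
    (hg : ∀ i, |g i| ≤ B) : |∑' i, g i| ≤ B := by
  rcases isEmpty_or_nonempty ι with hι | ⟨⟨i⟩⟩
  · simpa using hB
  · rw [tsum_eq_single i fun _ hi' => absurd (Subsingleton.elim _ _) hi']
    exact hg i

lemma tsum_sq_le_of_abs_le_zpow {T : ℤ → ℝ} {b s : ℝ} {k : ℤ} (hs : 1 < s)
    (hT : ∀ j, |T j| ≤ b * s ^ j) (hT_zero : ∀ j, k < j → T j = 0) :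
    ∑' j, T j ^ 2 ≤ (b * s ^ k) ^ 2 * (1 - (s ^ 2)⁻¹)⁻¹ := by
  have hs0 : 0 < s := one_pos.trans hs
  have hr0 : 0 ≤ (s ^ 2)⁻¹ := by positivity
  have hr1 : (s ^ 2)⁻¹ < 1 := inv_lt_one_of_one_lt₀ (one_lt_pow₀ hs two_ne_zero)
  have h_reindex : ∑' i : ℕ, T (k - i) ^ 2 = ∑' j, T j ^ 2 := by
    refine Function.Injective.tsum_eq (f := fun j => T j ^ 2) (g := fun i : ℕ => k - (i : ℤ))
      (fun a b hab => by simp only at hab; omega) fun j hj => ?_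
    have hjk : j ≤ k := not_lt.mp fun hkj => hj (by simp [hT_zero j hkj])
    exact ⟨(k - j).toNat, by simp only; omega⟩
  have h_term : ∀ i : ℕ, T (k - i) ^ 2 ≤ (b * s ^ k) ^ 2 * ((s ^ 2)⁻¹) ^ i := fun i => by
    have h := hT (k - i)
    rw [zpow_sub₀ hs0.ne', zpow_natCast, div_eq_mul_inv, ← mul_assoc] at h
    calc T (k - i) ^ 2 = |T (k - i)| ^ 2 := (sq_abs _).symm
      _ ≤ (b * s ^ k * (s ^ i)⁻¹) ^ 2 := pow_le_pow_left₀ (abs_nonneg _) h 2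
      _ = (b * s ^ k) ^ 2 * ((s ^ 2)⁻¹) ^ i := by
        rw [inv_pow, ← pow_mul, mul_comm 2 i, pow_mul]; ring
  have h_geom := (summable_geometric_of_lt_one hr0 hr1).mul_left ((b * s ^ k) ^ 2)
  rw [← h_reindex, ← tsum_geometric_of_lt_one hr0 hr1, ← _root_.tsum_mul_left]
  exact (h_geom.of_nonneg_of_le (fun _ => sq_nonneg _) h_term).tsum_le_tsum h_term h_geom

lemma rpow_sub_mul_eLpNorm'_restrict_le {α E : Type*} [MeasurableSpace α] [NormedAddCommGroup E]
    {μ : Measure α} {s : Set α} {g : α → E} {A : ℝ≥0∞} {a q : ℝ} (hq : 0 < q) (hs0 : μ s ≠ 0)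
    (hs : μ s ≠ ⊤) (hg : ∀ x, ‖g x‖ₑ ≤ A) :
    μ s ^ (a - 1 / q) * eLpNorm' g q (μ.restrict s) ≤ μ s ^ a * A := by
  have h_norm : eLpNorm' g q (μ.restrict s) ≤ A * μ s ^ (1 / q) := by
    refine (eLpNorm'_mono_enorm_ae (g := fun _ => A) hq.le (ae_of_all _ hg)).trans_eq ?_
    rw [eLpNorm'_const _ hq, enorm_eq_self, Measure.restrict_apply_univ]
  calc μ s ^ (a - 1 / q) * eLpNorm' g q (μ.restrict s)
      ≤ μ s ^ (a - 1 / q) * (A * μ s ^ (1 / q)) := by gcongr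
    _ = μ s ^ a * A := by
      rw [mul_left_comm, ← ENNReal.rpow_add _ _ hs0 hs, sub_add_cancel, mul_comm]

section DyadicCube

variable {n : ℕ}

lemma dyadicCube_eq_pi (j : ℤ) (m : Fin n → ℤ) :
    dyadicCube n j m = Set.univ.pi fun i => Set.Ico ((m i : ℝ) / 2 ^ j) ((m i + 1) / 2 ^ j) := by
  ext x
  simp [dyadicCube, Set.mem_pi]

lemma volume_dyadicCube (j : ℤ) (m : Fin n → ℤ) :
    volume (dyadicCube n j m) = ENNReal.ofReal ((2 : ℝ) ^ (-((j : ℝ) * n))) := by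
  have side : ∀ i, ((m i : ℝ) + 1) / 2 ^ j - m i / 2 ^ j = (2 : ℝ) ^ (-(j : ℝ)) := fun i => by
    rw [Real.rpow_neg zero_le_two, Real.rpow_intCast]
    ring
  rw [dyadicCube_eq_pi, volume_pi_pi]
  simp only [Real.volume_Ico, side, Finset.prod_const, Finset.card_univ, Fintype.card_fin]
  rw [← ENNReal.ofReal_pow (by positivity), ← Real.rpow_natCast, ← Real.rpow_mul zero_le_two,
    neg_mul]

lemma volume_dyadicCube_ne_zero (j : ℤ) (m : Fin n → ℤ) : volume (dyadicCube n j m) ≠ 0 := by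
  rw [volume_dyadicCube]
  exact ENNReal.ofReal_ne_zero_iff.mpr (by positivity)

lemma volume_dyadicCube_ne_top (j : ℤ) (m : Fin n → ℤ) : volume (dyadicCube n j m) ≠ ⊤ := by
  rw [volume_dyadicCube]
  exact ENNReal.ofReal_ne_top

lemma volume_dyadicCube_rpow_one_div (p : ℝ) (j : ℤ) (m : Fin n → ℤ) :
    volume (dyadicCube n j m) ^ (1 / p) = ENNReal.ofReal (((2 : ℝ) ^ ((n : ℝ) / p)) ^ j)⁻¹ := by
  rw [volume_dyadicCube, ENNReal.ofReal_rpow_of_pos (by positivity), ← Real.rpow_intCast,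
    ← Real.rpow_mul zero_le_two, ← Real.rpow_mul zero_le_two, ← Real.rpow_neg zero_le_two]
  ring_nf

lemma eq_of_mem_dyadicCube {j : ℤ} {m m' : Fin n → ℤ} {x : Fin n → ℝ}
    (h : x ∈ dyadicCube n j m) (h' : x ∈ dyadicCube n j m') : m = m' := by
  have index_eq_floor : ∀ {m}, x ∈ dyadicCube n j m → ∀ i, m i = ⌊x i * 2 ^ j⌋ :=
    fun {m} hm i => by
      have h2 : (0 : ℝ) < 2 ^ j := by positivity
      rw [eq_comm, Int.floor_eq_iff, ← div_le_iff₀ h2, ← lt_div_iff₀ h2]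
      exact hm i
  funext i
  rw [index_eq_floor h, index_eq_floor h']

lemma le_of_dyadicCube_subset (hn : 0 < n) {j k : ℤ} {m m₀ : Fin n → ℤ}
    (h : dyadicCube n k m₀ ⊆ dyadicCube n j m) : j ≤ k := by
  have hvol := measure_mono (μ := volume) h
  rw [volume_dyadicCube, volume_dyadicCube,
    ENNReal.ofReal_le_ofReal_iff (by positivity), Real.rpow_le_rpow_left_iff one_lt_two] at hvol
  have hn' : (0 : ℝ) < n := by exact_mod_cast hn
  exact_mod_cast le_of_mul_le_mul_right (neg_le_neg_iff.mp hvol) hn'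

instance subsingleton_dyadicCube_supset (k j : ℤ) (m₀ : Fin n → ℤ) :
    Subsingleton {m : Fin n → ℤ // dyadicCube n k m₀ ⊆ dyadicCube n j m} := by
  obtain ⟨x, hx⟩ := nonempty_of_measure_ne_zero (volume_dyadicCube_ne_zero k m₀)
  exact ⟨fun ⟨m, hm⟩ ⟨m', hm'⟩ => Subtype.ext (eq_of_mem_dyadicCube (hm hx) (hm' hx))⟩

end DyadicCube

section HaarFunction

variable {n : ℕ}

lemma abs_haarBase1_le (e : ZMod 2) (t : ℝ) : |haarBase1 e t| ≤ 1 := by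
  unfold haarBase1
  by_cases h1 : 2 * t ∈ Set.Ico (0 : ℝ) 1
  · have h2 : 2 * t ∉ Set.Ico (1 : ℝ) 2 := fun h2 => (h1.2.trans_le h2.1).false
    simp [h1, h2]
  · rw [Set.indicator_of_notMem h1, zero_add, abs_mul, abs_neg_one_pow, one_mul]
    by_cases h2 : 2 * t ∈ Set.Ico (1 : ℝ) 2 <;> simp [h2]

lemma haarBase1_eq_zero {t : ℝ} (e : ZMod 2) (ht : t ∉ Set.Ico 0 1) : haarBase1 e t = 0 := by
  have h1 : 2 * t ∉ Set.Ico (0 : ℝ) 1 := fun h => ht ⟨by linarith [h.1], by linarith [h.2]⟩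
  have h2 : 2 * t ∉ Set.Ico (1 : ℝ) 2 := fun h => ht ⟨by linarith [h.1], by linarith [h.2]⟩
  simp [haarBase1, h1, h2]

lemma abs_haarFn_le (ε : Fin n → ZMod 2) (j : ℤ) (m : Fin n → ℤ) (x : Fin n → ℝ) :
    |haarFn ε j m x| ≤ (2 : ℝ) ^ ((j : ℝ) * n / 2) := by
  rw [haarFn, haarBase, abs_mul, Finset.abs_prod, abs_of_pos (by positivity)]
  exact mul_le_of_le_one_right (by positivity)
    (Finset.prod_le_one (fun _ _ => abs_nonneg _) fun _ _ => abs_haarBase1_le _ _)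

lemma haarFn_eq_zero (ε : Fin n → ZMod 2) (j : ℤ) (m : Fin n → ℤ) {x : Fin n → ℝ}
    (hx : x ∉ dyadicCube n j m) : haarFn ε j m x = 0 := by
  obtain ⟨i, hi⟩ : ∃ i, (2 : ℝ) ^ j * x i - m i ∉ Set.Ico 0 1 := by
    contrapose! hx
    intro i
    have h2 : (0 : ℝ) < 2 ^ j := by positivity
    rw [div_le_iff₀ h2, lt_div_iff₀ h2]
    constructor <;> linarith [(hx i).1, (hx i).2]
  rw [haarFn, haarBase, Finset.prod_eq_zero (Finset.mem_univ i) (haarBase1_eq_zero _ hi),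
    mul_zero]

end HaarFunction

section Morrey

variable {n : ℕ} {p : ℝ} {f : (Fin n → ℝ) → ℝ}

lemma lintegral_enorm_le_morreyNorm (j : ℤ) (m : Fin n → ℤ) :
    ∫⁻ x in dyadicCube n j m, ‖f x‖ₑ ≤
      volume (dyadicCube n j m) ^ (1 - 1 / p) * morreyNorm p 1 f := by
  have h_cube : volume (dyadicCube n j m) ^ (1 / p - 1) * ∫⁻ x in dyadicCube n j m, ‖f x‖ₑ ≤
      morreyNorm p 1 f := by
    simpa [morreyNorm, enorm_eq_nnnorm] using le_iSup₂ (f := fun j m =>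
      volume (dyadicCube n j m) ^ (1 / p - 1 / 1) *
        (∫⁻ x in dyadicCube n j m, ((‖f x‖₊ : ℝ≥0∞)) ^ (1 : ℝ)) ^ (1 / (1 : ℝ))) j m
  calc ∫⁻ x in dyadicCube n j m, ‖f x‖ₑ
      = volume (dyadicCube n j m) ^ (1 - 1 / p) *
          (volume (dyadicCube n j m) ^ (1 / p - 1) * ∫⁻ x in dyadicCube n j m, ‖f x‖ₑ) := by
        rw [← mul_assoc, ← ENNReal.rpow_add _ _ (volume_dyadicCube_ne_zero j m)
          (volume_dyadicCube_ne_top j m)]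
        simp
    _ ≤ volume (dyadicCube n j m) ^ (1 - 1 / p) * morreyNorm p 1 f := by gcongr

lemma lintegral_enorm_ne_top_of_memMorrey (hf : MemMorrey p 1 f) (j : ℤ) (m : Fin n → ℤ) :
    ∫⁻ x in dyadicCube n j m, ‖f x‖ₑ ≠ ⊤ :=
  ne_top_of_le_ne_top (ENNReal.mul_ne_top (ENNReal.rpow_ne_top_of_ne_zero
      (volume_dyadicCube_ne_zero j m) (volume_dyadicCube_ne_top j m)) hf.2)
    (lintegral_enorm_le_morreyNorm j m)

lemma MemMorrey.integrableOn_dyadicCube (hf : MemMorrey p 1 f) (j : ℤ) (m : Fin n → ℤ) :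
    IntegrableOn f (dyadicCube n j m) :=
  ⟨hf.1.restrict, (lintegral_enorm_ne_top_of_memMorrey hf j m).lt_top⟩

lemma integral_norm_le_morreyNorm (hf : MemMorrey p 1 f) (j : ℤ) (m : Fin n → ℤ) :
    ∫ x in dyadicCube n j m, ‖f x‖ ≤
      ((2 : ℝ) ^ (-((j : ℝ) * n))) ^ (1 - 1 / p) * (morreyNorm p 1 f).toReal := by
  rw [integral_norm_eq_lintegral_enorm hf.1.restrict]
  refine (ENNReal.toReal_mono ?_ (lintegral_enorm_le_morreyNorm (p := p) j m)).trans_eq ?_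
  · exact ENNReal.mul_ne_top (ENNReal.rpow_ne_top_of_ne_zero
      (volume_dyadicCube_ne_zero j m) (volume_dyadicCube_ne_top j m)) hf.2
  · rw [volume_dyadicCube, ENNReal.ofReal_rpow_of_pos (by positivity), ENNReal.toReal_mul,
      ENNReal.toReal_ofReal (by positivity)]

end Morrey

section HaarCoefficient

variable {n : ℕ} {f : (Fin n → ℝ) → ℝ}

lemma abs_haarCoeff_le (ε : Fin n → ZMod 2) {j : ℤ} {m : Fin n → ℤ}
    (hf : IntegrableOn f (dyadicCube n j m)) :
    |haarCoeff f ε j m| ≤ (2 : ℝ) ^ ((j : ℝ) * n / 2) * ∫ x in dyadicCube n j m, ‖f x‖ := by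
  have h_supp : haarCoeff f ε j m = ∫ x in dyadicCube n j m, f x * haarFn ε j m x :=
    (setIntegral_eq_integral_of_forall_compl_eq_zero fun x hx => by
      rw [haarFn_eq_zero ε j m hx, mul_zero]).symm
  rw [h_supp, ← Real.norm_eq_abs, ← integral_const_mul]
  refine norm_integral_le_of_norm_le (hf.norm.const_mul _) (ae_of_all _ fun x => ?_)
  rw [norm_mul, mul_comm, Real.norm_eq_abs (haarFn ε j m x)]
  gcongr
  exact abs_haarFn_le ε j m x

lemma abs_haarCoeff_mul_haarFn_le {p : ℝ} (hf : MemMorrey p 1 f) (ε : Fin n → ZMod 2) (j : ℤ)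
    (m : Fin n → ℤ) (x : Fin n → ℝ) :
    |haarCoeff f ε j m * haarFn ε j m x| ≤
      (morreyNorm p 1 f).toReal * ((2 : ℝ) ^ ((n : ℝ) / p)) ^ j := by
  have h_exp : (2 : ℝ) ^ ((j : ℝ) * n / 2) * ((2 : ℝ) ^ (-((j : ℝ) * n))) ^ (1 - 1 / p) *
      (2 : ℝ) ^ ((j : ℝ) * n / 2) = ((2 : ℝ) ^ ((n : ℝ) / p)) ^ j := by
    rw [← Real.rpow_intCast, ← Real.rpow_mul zero_le_two, ← Real.rpow_mul zero_le_two,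
      ← Real.rpow_add two_pos, ← Real.rpow_add two_pos]
    ring_nf
  calc |haarCoeff f ε j m * haarFn ε j m x|
      ≤ (2 : ℝ) ^ ((j : ℝ) * n / 2) * (∫ y in dyadicCube n j m, ‖f y‖) *
          (2 : ℝ) ^ ((j : ℝ) * n / 2) := by
        rw [abs_mul]
        gcongr
        · exact abs_haarCoeff_le ε (hf.integrableOn_dyadicCube j m)
        · exact abs_haarFn_le ε j m x
    _ ≤ (2 : ℝ) ^ ((j : ℝ) * n / 2) *
          (((2 : ℝ) ^ (-((j : ℝ) * n))) ^ (1 - 1 / p) * (morreyNorm p 1 f).toReal) *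
          (2 : ℝ) ^ ((j : ℝ) * n / 2) := by
        gcongr
        exact integral_norm_le_morreyNorm hf j m
    _ = (morreyNorm p 1 f).toReal * ((2 : ℝ) ^ ((n : ℝ) / p)) ^ j := by
        rw [← h_exp]
        ring

end HaarCoefficient

section ContainingCubes

variable {n : ℕ} {p : ℝ} {f : (Fin n → ℝ) → ℝ}

lemma haarSquareFnUp_le (hn : 0 < n) (hp : 0 < p) (hf : MemMorrey p 1 f) (ε : Fin n → ZMod 2)
    (k : ℤ) (m₀ : Fin n → ℤ) (x : Fin n → ℝ) :
    haarSquareFnUp f ε k m₀ x ≤ (morreyNorm p 1 f).toReal * ((2 : ℝ) ^ ((n : ℝ) / p)) ^ k *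
      √((1 - (((2 : ℝ) ^ ((n : ℝ) / p)) ^ 2)⁻¹)⁻¹) := by
  have hs : 1 < (2 : ℝ) ^ ((n : ℝ) / p) := Real.one_lt_rpow one_lt_two (by positivity)
  unfold haarSquareFnUp
  have h_sum := tsum_sq_le_of_abs_le_zpow (k := k) (T := fun j =>
      ∑' m : {m : Fin n → ℤ // dyadicCube n k m₀ ⊆ dyadicCube n j m},
        haarCoeff f ε j m.1 * haarFn ε j m.1 x) hs
    (fun j => abs_tsum_le_of_subsingleton (by positivity) fun m =>
      abs_haarCoeff_mul_haarFn_le hf ε j m.1 x)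
    (fun j hkj => by
      have : IsEmpty {m : Fin n → ℤ // dyadicCube n k m₀ ⊆ dyadicCube n j m} :=
        ⟨fun m => (le_of_dyadicCube_subset hn m.2).not_gt hkj⟩
      exact tsum_empty)
  refine (Real.sqrt_le_sqrt h_sum).trans_eq ?_
  rw [Real.sqrt_mul (sq_nonneg _), Real.sqrt_sq (by positivity)]

end ContainingCubes

/-- estimate (100107-1): for `f ∈ M^p_1` and a dyadic cube `R = Q_{k,m₀}`,
`|R|^{1/p−1/q} (∫_R (Σ_j |Σ_{Q∈𝒟_j, Q⊇R}⟨f,h^ε_Q⟩h^ε_Q|²)^{q/2})^{1/q} ≤ C‖f‖_{M^p_1}`. -/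
theorem squareFn_over_containing_cubes_bound (n : ℕ) (hn : 0 < n) (p q : ℝ)
    (hq : 1 ≤ q) (hqp : q ≤ p) :
    ∃ C : ℝ, 0 < C ∧
      ∀ (f : (Fin n → ℝ) → ℝ) (ε : Fin n → ZMod 2), MemMorrey p 1 f → ε ≠ 0 →
        ∀ (k : ℤ) (m₀ : Fin n → ℤ),
          volume (dyadicCube n k m₀) ^ (1 / p - 1 / q) *
              (∫⁻ x in dyadicCube n k m₀,
                ((‖haarSquareFnUp f ε k m₀ x‖₊ : ℝ≥0∞)) ^ q) ^ (1 / q)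
            ≤ ENNReal.ofReal C * morreyNorm p 1 f := by
  have hp : 0 < p := by linarith
  set s := (2 : ℝ) ^ ((n : ℝ) / p)
  have hs : 1 < s := Real.one_lt_rpow one_lt_two (by positivity)
  have hs2 : (s ^ 2)⁻¹ < 1 := inv_lt_one_of_one_lt₀ (one_lt_pow₀ hs two_ne_zero)
  set C := √((1 - (s ^ 2)⁻¹)⁻¹)
  refine ⟨C, Real.sqrt_pos.mpr (inv_pos.mpr (sub_pos.mpr hs2)), fun f ε hf _ k m₀ => ?_⟩
  set M := (morreyNorm p 1 f).toReal
  have h_pointwise : ∀ x, ‖haarSquareFnUp f ε k m₀ x‖ₑ ≤ ENNReal.ofReal (M * s ^ k * C) :=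
    fun x => by
      have h_nonneg : 0 ≤ haarSquareFnUp f ε k m₀ x := Real.sqrt_nonneg _
      rw [Real.enorm_eq_ofReal h_nonneg]
      exact ENNReal.ofReal_le_ofReal (haarSquareFnUp_le hn hp hf ε k m₀ x)
  -- `(∫⁻ x in R, ‖g x‖ₑ ^ q) ^ (1 / q)` is `eLpNorm' g q (volume.restrict R)` unfolded
  refine (rpow_sub_mul_eLpNorm'_restrict_le (by linarith) (volume_dyadicCube_ne_zero k m₀)
    (volume_dyadicCube_ne_top k m₀) h_pointwise).trans_eq ?_
  have h_cancel : (s ^ k)⁻¹ * (M * s ^ k * C) = C * M := by field_simp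
  rw [volume_dyadicCube_rpow_one_div, ← ENNReal.ofReal_mul (by positivity), h_cancel,
    ENNReal.ofReal_mul (by positivity), ENNReal.ofReal_toReal hf.2]

end
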